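/- Global bias-robustness of the Energy Score posterior: Assume the prior density π is bounded over Θ and the space X is bounded (so sup_{x,y∈X} ‖x − y‖₂ ≤ B < ∞). Then for any fixed dataset y_1,…,y_n and any β ∈ (0,2), the Energy Score posterior π_{S_E^β}(·|y_1,…,y_n) is globally bias-robust, i.e. sup_{θ∈Θ} sup_{z∈X} |PIF(z, θ, P̂_n)| < ∞. -/

import Mathlib

open MeasureTheory Filter Set Topology Real

/-!
The energy score of a law supported in a set of diameter at most `B` lies in `[-B^β, 2B^β]`.
Write the contaminated posterior density as `A θ * exp (c θ z * ε) / ∫ A θ' * exp (c θ' z * ε)`,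
where `A` is the unnormalised uncontaminated posterior and
`c θ z = -w n (S_E^β(P_θ, z) - (1/n) ∑ᵢ S_E^β(P_θ, yᵢ))`. Then `|c| ≤ 4 w n B^β` uniformly,
and differentiating under the integral at `ε = 0` gives `|PIF| ≤ 2 (4 w n B^β) sup A / ∫ A`.

Nothing makes `A` or `c` measurable in `θ`, so the normalising integral may be a junk value.
By Hölder, the set of `ε` at which the tilted integrand is integrable is an interval; if it is
not a neighbourhood of `0`, the density vanishes on one side of `0`, so its derivative there is `0`.
-/

theorem deriv_eq_zero_of_eqOn_zero {f : ℝ → ℝ} {s : Set ℝ} {x : ℝ}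
    (hs : UniqueDiffWithinAt ℝ s x) (hx : x ∈ closure s) (hf : EqOn f 0 s) : deriv f x = 0 := by
  by_cases hd : DifferentiableAt ℝ f x
  · have hfx : f x = 0 := by
      have hsub : f '' s ⊆ {0} := by rintro _ ⟨t, ht, rfl⟩; exact hf ht
      simpa using closure_mono hsub (hd.continuousAt.continuousWithinAt.mem_closure_image hx)
    exact hs.eq_deriv _ hd.hasDerivAt.hasDerivWithinAt
      ((hasDerivWithinAt_const x s 0).congr hf hfx)
  · exact deriv_zero_of_not_differentiableAt hd

theorem aestronglyMeasurable_of_hasDerivAt {α E : Type*} [MeasurableSpace α] {μ : Measure α}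
    [NormedAddCommGroup E] [NormedSpace ℝ E] {F : ℝ → α → E} {F' : α → E} {x₀ : ℝ}
    (hF : ∀ᶠ ε in 𝓝 x₀, AEStronglyMeasurable (F ε) μ)
    (hF' : ∀ᵐ a ∂μ, HasDerivAt (F · a) (F' a) x₀) : AEStronglyMeasurable F' μ := by
  obtain ⟨u, hu⟩ := exists_seq_tendsto (𝓝[≠] x₀)
  obtain ⟨N, hN⟩ := eventually_atTop.1 ((hu.mono_right nhdsWithin_le_nhds).eventually hF)
  refine aestronglyMeasurable_of_tendsto_ae atTop
    (f := fun k a => slope (F · a) x₀ (u (k + N))) (fun k => ?_) ?_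
  · simp only [slope_def_module]
    exact ((hN _ (Nat.le_add_left N k)).sub hF.self_of_nhds).const_smul _
  · filter_upwards [hF'] with a ha
    exact (hasDerivAt_iff_tendsto_slope.1 ha).comp ((tendsto_add_atTop_iff_nat N).2 hu)

theorem mul_exp_mul_add_eq_rpow_mul_rpow {A : ℝ} (hA : 0 ≤ A) (c u v : ℝ) {s t : ℝ}
    (hst : s + t = 1) :
    A * exp (c * (s * u + t * v)) = (A * exp (c * u)) ^ s * (A * exp (c * v)) ^ t := by
  rw [mul_rpow hA (exp_pos _).le, mul_rpow hA (exp_pos _).le,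
    ← exp_mul, ← exp_mul, mul_mul_mul_comm, ← rpow_add' hA (by rw [hst]; norm_num),
    hst, rpow_one, ← exp_add]
  ring_nf

section TiltedIntegral

variable {α : Type*} [MeasurableSpace α] {μ : Measure α} {A c : α → ℝ}

theorem convex_setOf_integrable_mul_exp (hA : 0 ≤ A) :
    Convex ℝ {ε : ℝ | Integrable (fun x => A x * exp (c x * ε)) μ} := by
  intro u hu v hv s t hs ht hst
  have hrpow : ∀ x, A x * exp (c x * (s • u + t • v)) =
      (A x * exp (c x * u)) ^ s * (A x * exp (c x * v)) ^ t := fun x =>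
    mul_exp_mul_add_eq_rpow_mul_rpow (hA x) _ _ _ hst
  have hmeas : AEStronglyMeasurable (fun x => A x * exp (c x * (s • u + t • v))) μ := by
    simp only [hrpow]
    exact ((continuous_rpow_const hs).comp_aestronglyMeasurable hu.1).mul
      ((continuous_rpow_const ht).comp_aestronglyMeasurable hv.1)
  refine ((hu.const_mul s).add (hv.const_mul t)).mono' hmeas (Eventually.of_forall fun x => ?_)
  rw [norm_eq_abs, abs_of_nonneg (mul_nonneg (hA x) (exp_pos _).le), hrpow]
  exact geom_mean_le_arith_mean2_weighted hs ht
    (mul_nonneg (hA x) (exp_pos _).le) (mul_nonneg (hA x) (exp_pos _).le) hst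

theorem exp_mul_le_exp_mul_add_exp_mul (c : ℝ) {a b ε : ℝ} (ha : a ≤ ε) (hb : ε ≤ b) :
    exp (c * ε) ≤ exp (c * a) + exp (c * b) := by
  rcases le_total 0 c with hc | hc
  · exact (exp_le_exp.2 (mul_le_mul_of_nonneg_left hb hc)).trans
      (le_add_of_nonneg_left (exp_pos _).le)
  · exact (exp_le_exp.2 (mul_le_mul_of_nonpos_left ha hc)).trans
      (le_add_of_nonneg_right (exp_pos _).le)

theorem hasDerivAt_integral_mul_exp (hA : 0 ≤ A) {M a b x₀ : ℝ}
    (hc : ∀ᵐ x ∂μ, |c x| ≤ M) (hax : a < x₀) (hxb : x₀ < b)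
    (ha : Integrable (fun x => A x * exp (c x * a)) μ)
    (hb : Integrable (fun x => A x * exp (c x * b)) μ) :
    HasDerivAt (fun ε => ∫ x, A x * exp (c x * ε) ∂μ)
      (∫ x, c x * (A x * exp (c x * x₀)) ∂μ) x₀ := by
  have hint : ∀ ε ∈ Icc a b, Integrable (fun x => A x * exp (c x * ε)) μ := fun ε hε =>
    (convex_setOf_integrable_mul_exp hA).ordConnected.out ha hb hε
  have hderiv : ∀ x ε, HasDerivAt (fun ε => A x * exp (c x * ε))
      (c x * (A x * exp (c x * ε))) ε := fun x ε => by
    simpa [mul_comm, mul_left_comm] using ((hasDerivAt_mul_const (c x)).exp).const_mul (A x)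
  have hIoo : Ioo a b ∈ 𝓝 x₀ := Ioo_mem_nhds hax hxb
  have hmeas : ∀ᶠ ε in 𝓝 x₀, AEStronglyMeasurable (fun x => A x * exp (c x * ε)) μ :=
    mem_of_superset hIoo fun ε hε => (hint ε (Ioo_subset_Icc_self hε)).1
  refine (hasDerivAt_integral_of_dominated_loc_of_deriv_le hIoo hmeas
    (hint x₀ ⟨hax.le, hxb.le⟩) (aestronglyMeasurable_of_hasDerivAt hmeas
      (Eventually.of_forall fun x => hderiv x x₀))
    (bound := fun x => M * (A x * exp (c x * a) + A x * exp (c x * b))) ?_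
    ((ha.add hb).const_mul M) (Eventually.of_forall fun x ε _ => hderiv x ε)).2
  filter_upwards [hc] with x hcx ε hε
  rw [norm_mul, norm_eq_abs, norm_eq_abs,
    abs_of_nonneg (mul_nonneg (hA x) (exp_pos _).le), ← mul_add]
  exact mul_le_mul hcx (mul_le_mul_of_nonneg_left
    (exp_mul_le_exp_mul_add_exp_mul _ hε.1.le hε.2.le) (hA x))
    (mul_nonneg (hA x) (exp_pos _).le) ((abs_nonneg _).trans hcx)

theorem abs_deriv_mul_exp_div_integral_le (hA : 0 ≤ A) {M k a : ℝ}
    (hc : ∀ᵐ x ∂μ, |c x| ≤ M) (hk : |k| ≤ M) :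
    |deriv (fun ε => a * exp (k * ε) / ∫ x, A x * exp (c x * ε) ∂μ) 0| ≤
      2 * M * |a| / ∫ x, A x ∂μ := by
  have hM : 0 ≤ M := (abs_nonneg k).trans hk
  have hbound_nonneg : 0 ≤ 2 * M * |a| / ∫ x, A x ∂μ := by
    have := integral_nonneg hA (μ := μ)
    positivity
  by_cases hstraddle :
      (∃ a' < 0, Integrable (fun x => A x * exp (c x * a')) μ) ∧
      (∃ b > 0, Integrable (fun x => A x * exp (c x * b)) μ)
  · obtain ⟨⟨a', ha'0, ha'⟩, ⟨b, hb0, hb⟩⟩ := hstraddle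
    have hAint : Integrable A μ := by
      simpa using (convex_setOf_integrable_mul_exp hA).ordConnected.out ha' hb
        ⟨ha'0.le, hb0.le⟩
    rcases (integral_nonneg hA).eq_or_lt with hD | hD
    · have hzero : ∀ ε, ∫ x, A x * exp (c x * ε) ∂μ = 0 := fun ε => by
        have hA0 := (integral_eq_zero_iff_of_nonneg hA hAint).1 hD.symm
        rw [integral_eq_zero_of_ae]
        filter_upwards [hA0] with x hx
        simp [hx]
      simpa [hzero] using hbound_nonneg
    have hnum : HasDerivAt (fun ε => a * exp (k * ε)) (a * k) 0 := by
      simpa [mul_comm] using ((hasDerivAt_mul_const k (x := 0)).exp).const_mul a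
    have hden := hasDerivAt_integral_mul_exp hA hc ha'0 hb0 ha' hb
    simp only [mul_zero, exp_zero, mul_one] at hden
    rw [(hnum.fun_div hden (by simpa using hD.ne')).deriv]
    simp only [mul_zero, exp_zero, mul_one]
    set D := ∫ x, A x ∂μ
    set D' := ∫ x, c x * A x ∂μ
    have hD' : |D'| ≤ M * D := by
      rw [← integral_const_mul, ← norm_eq_abs]
      refine norm_integral_le_of_norm_le (hAint.const_mul M) ?_
      filter_upwards [hc] with x hcx
      rw [norm_mul, norm_eq_abs, norm_eq_abs, abs_of_nonneg (hA x)]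
      exact mul_le_mul_of_nonneg_right hcx (hA x)
    have hnum_le : |a * k * D - a * D'| ≤ 2 * M * |a| * D :=
      calc |a * k * D - a * D'| ≤ |a| * |k| * D + |a| * |D'| :=
            (abs_sub _ _).trans_eq (by rw [abs_mul, abs_mul, abs_mul, abs_of_pos hD])
        _ ≤ |a| * M * D + |a| * (M * D) := by gcongr
        _ = 2 * M * |a| * D := by ring
    rw [abs_div, abs_pow, abs_of_pos hD, div_le_div_iff₀ (by positivity) hD, sq, ← mul_assoc]
    exact mul_le_mul_of_nonneg_right hnum_le hD.le
  · -- the denominator is the junk value `0` on one side of `0`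
    rw [not_and_or] at hstraddle
    rcases hstraddle with hleft | hright
    · rw [deriv_eq_zero_of_eqOn_zero (uniqueDiffWithinAt_Iio 0) (by simp [closure_Iio])
        fun ε hε => by simp [integral_undef fun h => hleft ⟨ε, hε, h⟩]]
      simpa using hbound_nonneg
    · rw [deriv_eq_zero_of_eqOn_zero (uniqueDiffWithinAt_Ioi 0) (by simp [closure_Ioi])
        fun ε hε => by simp [integral_undef fun h => hright ⟨ε, hε, h⟩]]
      simpa using hbound_nonneg

end TiltedIntegral

section EnergyScore

variable {E : Type*} [NormedAddCommGroup E] [MeasurableSpace E]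
  {μ : Measure E} [IsProbabilityMeasure μ] {X : Set E}

theorem ae_mem_of_measure_eq_one_of_subset [OpensMeasurableSpace E] {S : Set E}
    (hX : μ X = 1) (hS : IsClosed S) (hXS : X ⊆ S) : ∀ᵐ x ∂μ, x ∈ S :=
  (prob_compl_eq_zero_iff hS.measurableSet).2
    (le_antisymm prob_le_one (hX ▸ measure_mono hXS))

theorem integral_rpow_norm_sub_le {B β : ℝ} (hβ : 0 ≤ β) {v : E}
    (hv : ∀ᵐ x ∂μ, ‖x - v‖ ≤ B) : ∫ x, ‖x - v‖ ^ β ∂μ ≤ B ^ β := by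
  refine (integral_mono_of_nonneg (Eventually.of_forall fun x => by positivity)
    (integrable_const (B ^ β)) ?_).trans_eq (by simp)
  filter_upwards [hv] with x hx
  exact rpow_le_rpow (norm_nonneg _) hx hβ

theorem abs_energyScore_le [OpensMeasurableSpace E] {B β : ℝ} (hβ : 0 ≤ β) (hX : μ X = 1)
    (hXB : ∀ x ∈ X, ∀ x' ∈ X, ‖x - x'‖ ≤ B) {v : E} (hv : v ∈ X) :
    |2 * ∫ x, ‖x - v‖ ^ β ∂μ - ∫ x, ∫ x', ‖x - x'‖ ^ β ∂μ ∂μ| ≤ 2 * B ^ β := by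
  have hball : ∀ x', IsClosed {x : E | ‖x - x'‖ ≤ B} := fun x' =>
    isClosed_le (continuous_id.sub continuous_const).norm continuous_const
  have hdiam : ∀ᵐ x ∂μ, ∀ x' ∈ X, ‖x - x'‖ ≤ B := by
    refine ae_mem_of_measure_eq_one_of_subset (S := {x | ∀ x' ∈ X, ‖x - x'‖ ≤ B}) hX ?_
      fun x hx x' hx' => hXB x hx x' hx'
    simpa only [ofPred_forall] using isClosed_biInter fun x' _ => hball x'
  have hsingle : ∫ x, ‖x - v‖ ^ β ∂μ ≤ B ^ β :=
    integral_rpow_norm_sub_le hβ (hdiam.mono fun x hx => hx v hv)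
  have hdouble : ∫ x, ∫ x', ‖x - x'‖ ^ β ∂μ ∂μ ≤ B ^ β := by
    refine (integral_mono_of_nonneg (Eventually.of_forall fun x => by positivity)
      (integrable_const (B ^ β)) ?_).trans_eq (by simp)
    filter_upwards [hdiam] with x hx
    simp_rw [norm_sub_rev x]
    exact integral_rpow_norm_sub_le hβ
      (ae_mem_of_measure_eq_one_of_subset hX (hball x) fun x' hx' =>
        (norm_sub_rev x' x).trans_le (hx x' hx'))
  have hsingle_nonneg : 0 ≤ ∫ x, ‖x - v‖ ^ β ∂μ := by positivity
  have hdouble_nonneg : 0 ≤ ∫ x, ∫ x', ‖x - x'‖ ^ β ∂μ ∂μ := by positivity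
  rw [abs_le]
  constructor <;> linarith

end EnergyScore

theorem mul_exp_neg_mul_mix_eq (q l s t ε : ℝ) :
    q * exp (-l * ((1 - ε) * s + ε * t)) = q * exp (-l * s) * exp (-l * (t - s) * ε) := by
  rw [mul_assoc, ← exp_add]
  ring_nf

theorem abs_inv_mul_sum_le {n : ℕ} (hn : 0 < n) {s : Fin n → ℝ} {K : ℝ} (hs : ∀ i, |s i| ≤ K) :
    |(n : ℝ)⁻¹ * ∑ i, s i| ≤ K := by
  rw [abs_mul, abs_inv, Nat.abs_cast, inv_mul_le_iff₀ (by positivity)]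
  simpa using (Finset.abs_sum_le_sum_abs s .univ).trans
    (Finset.sum_le_card_nsmul _ _ K fun i _ => hs i)

theorem energy_score_posterior_globally_bias_robust_general
    {d p : ℕ}
    (X : Set (EuclideanSpace ℝ (Fin d)))
    (Θ : Set (Fin p → ℝ)) (hΘ : MeasurableSet Θ)
    (P : (Fin p → ℝ) → Measure (EuclideanSpace ℝ (Fin d)))
    [∀ θ, IsProbabilityMeasure (P θ)]
    (hP_supp : ∀ θ ∈ Θ, P θ X = 1)
    (B : ℝ) (hB : 0 ≤ B)
    (hX_bdd : ∀ x ∈ X, ∀ x' ∈ X, ‖x - x'‖ ≤ B)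
    (β : ℝ) (hβ : β ∈ Set.Ioo (0 : ℝ) 2)
    (Se : (Fin p → ℝ) → EuclideanSpace ℝ (Fin d) → ℝ)
    (hSe : ∀ θ y', Se θ y' =
      2 * (∫ x, ‖x - y'‖ ^ β ∂(P θ)) - ∫ x, ∫ x', ‖x - x'‖ ^ β ∂(P θ) ∂(P θ))
    (prior : (Fin p → ℝ) → ℝ)
    (hprior_nonneg : ∀ θ, 0 ≤ prior θ)
    (hprior_bdd : ∃ Cπ : ℝ, ∀ θ ∈ Θ, prior θ ≤ Cπ)
    (w : ℝ) (hw : 0 < w)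
    (n : ℕ) (hn : 0 < n)
    (y : Fin n → EuclideanSpace ℝ (Fin d)) (hy : ∀ i, y i ∈ X) :
    ∃ C : ℝ, ∀ θ ∈ Θ, ∀ z ∈ X,
      |deriv (fun ε : ℝ =>
          prior θ * Real.exp (-(w * n) *
              ((1 - ε) * ((n : ℝ)⁻¹ * ∑ i, Se θ (y i)) + ε * Se θ z)) /
            ∫ θ' in Θ, prior θ' * Real.exp (-(w * n) *
              ((1 - ε) * ((n : ℝ)⁻¹ * ∑ i, Se θ' (y i)) + ε * Se θ' z))) 0| ≤ C := by
  obtain ⟨Cπ, hCπ⟩ := hprior_bdd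
  set S : (Fin p → ℝ) → ℝ := fun θ => (n : ℝ)⁻¹ * ∑ i, Se θ (y i)
  have hSe_le : ∀ θ ∈ Θ, ∀ v ∈ X, |Se θ v| ≤ 2 * B ^ β := fun θ hθ v hv => by
    rw [hSe]; exact abs_energyScore_le hβ.1.le (hP_supp θ hθ) hX_bdd hv
  have hS_le : ∀ θ ∈ Θ, |S θ| ≤ 2 * B ^ β := fun θ hθ =>
    abs_inv_mul_sum_le hn fun i => hSe_le θ hθ _ (hy i)
  have htilt_le : ∀ θ ∈ Θ, ∀ z ∈ X, |-(w * n) * (Se θ z - S θ)| ≤ w * n * (4 * B ^ β) :=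
      fun θ hθ z hz => by
    rw [abs_mul, abs_neg, abs_of_pos (by positivity)]
    gcongr
    linarith [abs_sub (Se θ z) (S θ), hSe_le θ hθ z hz, hS_le θ hθ]
  have hA_nonneg : ∀ θ, 0 ≤ prior θ * exp (-(w * n) * S θ) := fun θ =>
    mul_nonneg (hprior_nonneg θ) (exp_pos _).le
  have hA_le : ∀ θ ∈ Θ, prior θ * exp (-(w * n) * S θ) ≤
      Cπ * exp (w * n * (2 * B ^ β)) := fun θ hθ => by
    refine mul_le_mul (hCπ θ hθ) (exp_le_exp.2 ?_) (by positivity)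
      ((hprior_nonneg θ).trans (hCπ θ hθ))
    have := mul_le_mul_of_nonneg_left ((neg_le_abs (S θ)).trans (hS_le θ hθ))
      (by positivity : (0 : ℝ) ≤ w * n)
    linarith
  refine ⟨2 * (w * n * (4 * B ^ β)) * (Cπ * exp (w * n * (2 * B ^ β))) /
    ∫ θ in Θ, prior θ * exp (-(w * n) * S θ), fun θ hθ z hz => ?_⟩
  simp only [mul_exp_neg_mul_mix_eq]
  refine (abs_deriv_mul_exp_div_integral_le hA_nonneg
    (ae_restrict_of_forall_mem hΘ fun θ' hθ' => htilt_le θ' hθ' z hz) (htilt_le θ hθ z hz)).trans ?_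
  rw [abs_of_nonneg (hA_nonneg θ)]
  exact div_le_div_of_nonneg_right (mul_le_mul_of_nonneg_left (hA_le θ hθ) (by positivity))
    (integral_nonneg hA_nonneg)

/-- Global bias-robustness of the Energy Score posterior (Theorem 3.2 of the paper).
The prior density is bounded over `Θ` and the data space `X` is bounded, with
`sup_{x,y∈X} ‖x - y‖₂ ≤ B < ∞`.  For a fixed dataset `y₁,…,y_n ∈ X` and any
`β ∈ (0,2)`, the contaminated loss is
`L(θ, P̂_{n,ε,z}) = (1-ε)·(1/n)∑ᵢ S_E^β(P_θ, yᵢ) + ε·S_E^β(P_θ, z)` and the posterior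
influence function `PIF(z, θ, P̂_n)` is the derivative at `ε = 0` of the posterior
density `π(θ) exp(-w n L(θ, P̂_{n,ε,z})) / ∫_Θ π(θ') exp(-w n L(θ', P̂_{n,ε,z})) dθ'`.
Conclusion: `sup_{θ∈Θ} sup_{z∈X} |PIF(z, θ, P̂_n)| < ∞`. -/
theorem energy_score_posterior_globally_bias_robust
    {d p : ℕ}
    (X : Set (EuclideanSpace ℝ (Fin d)))
    (Θ : Set (Fin p → ℝ)) (hΘ : MeasurableSet Θ)
    (P : (Fin p → ℝ) → Measure (EuclideanSpace ℝ (Fin d)))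
    [∀ θ, IsProbabilityMeasure (P θ)]
    (hP_supp : ∀ θ ∈ Θ, P θ X = 1)
    (B : ℝ) (hB : 0 ≤ B)
    (hX_bdd : ∀ x ∈ X, ∀ x' ∈ X, ‖x - x'‖ ≤ B)
    (β : ℝ) (hβ : β ∈ Set.Ioo (0 : ℝ) 2)
    (Se : (Fin p → ℝ) → EuclideanSpace ℝ (Fin d) → ℝ)
    (hSe : ∀ θ y', Se θ y' =
      2 * (∫ x, ‖x - y'‖ ^ β ∂(P θ)) - ∫ x, ∫ x', ‖x - x'‖ ^ β ∂(P θ) ∂(P θ))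
    (prior : (Fin p → ℝ) → ℝ) (hprior_meas : Measurable prior)
    (hprior_nonneg : ∀ θ, 0 ≤ prior θ)
    (hprior_bdd : ∃ Cπ : ℝ, ∀ θ ∈ Θ, prior θ ≤ Cπ)
    (w : ℝ) (hw : 0 < w)
    (n : ℕ) (hn : 0 < n)
    (y : Fin n → EuclideanSpace ℝ (Fin d)) (hy : ∀ i, y i ∈ X) :
    ∃ C : ℝ, ∀ θ ∈ Θ, ∀ z ∈ X,
      |deriv (fun ε : ℝ =>
          prior θ * Real.exp (-(w * n) *
              ((1 - ε) * ((n : ℝ)⁻¹ * ∑ i, Se θ (y i)) + ε * Se θ z)) /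
            ∫ θ' in Θ, prior θ' * Real.exp (-(w * n) *
              ((1 - ε) * ((n : ℝ)⁻¹ * ∑ i, Se θ' (y i)) + ε * Se θ' z))) 0| ≤ C :=
  energy_score_posterior_globally_bias_robust_general X Θ hΘ P hP_supp B hB hX_bdd β hβ Se hSe prior
    hprior_nonneg hprior_bdd w hw n hn y hy
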